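/- A transitive TDS (X,T) is FK-continuous if and only if ρ_FK(x,y) = 0 for every x,y ∈ X. -/

import Mathlib

open Filter Topology MeasureTheory Set

namespace FKPaper

variable {X : Type*} [MetricSpace X]

/-- The maximal fit of an `(n,δ)`-match between the orbits of `x` and `z` under `T`:
the largest cardinality of the domain of an order-preserving bijection
`π : D → R`, with `D, R ⊆ {0,…,n-1}` and `dist (T^[i] x) (T^[π i] z) < δ` for `i ∈ D`. -/
noncomputable def maxFit (T : X → X) (δ : ℝ) (n : ℕ) (x z : X) : ℕ :=
  sSup {k : ℕ | ∃ i j : Fin k → ℕ, StrictMono i ∧ StrictMono j ∧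
    (∀ s, i s < n) ∧ (∀ s, j s < n) ∧ ∀ s, dist (T^[i s] x) (T^[j s] z) < δ}

/-- `f̄_{n,δ}(x,z) = 1 - (maximal fit of an (n,δ)-match of x and z)/n`. -/
noncomputable def fbarN (T : X → X) (δ : ℝ) (n : ℕ) (x z : X) : ℝ :=
  1 - (maxFit T δ n x z : ℝ) / n

/-- `f̄_δ(x,z) = limsup_{n→∞} f̄_{n,δ}(x,z)`. -/
noncomputable def fbar (T : X → X) (δ : ℝ) (x z : X) : ℝ :=
  Filter.limsup (fun n => fbarN T δ n x z) Filter.atTop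

/-- The Feldman–Katok pseudometric `ρ_FK(x,z) = inf {δ > 0 : f̄_δ(x,z) < δ}`. -/
noncomputable def rhoFK (T : X → X) (x z : X) : ℝ :=
  sInf {δ : ℝ | 0 < δ ∧ fbar T δ x z < δ}

/-- `x` is an FK-continuity point for `(X,T)`. -/
def FKContinuityPoint (T : X → X) (x : X) : Prop :=
  ∀ ε > 0, ∃ δ > 0, ∀ y : X, dist x y ≤ δ → rhoFK T x y ≤ ε

/-- The set of FK-continuity points. -/
def EqFK (T : X → X) : Set X := {x : X | FKContinuityPoint T x}

/-- Topological transitivity. -/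
def IsTransitive (T : X → X) : Prop :=
  ∀ U V : Set X, IsOpen U → IsOpen V → U.Nonempty → V.Nonempty →
    ∃ n : ℕ, 0 < n ∧ ((T^[n]) ⁻¹' U ∩ V).Nonempty

end FKPaper

/-! Matches compose along the middle orbit: a match of `x` with `y` of fit `k₁` and one of `y`
with `z` of fit `k₂`, both inside `{0,…,n-1}`, overlap on at least `k₁ + k₂ - n` indices of
`y`'s orbit, so `f̄_{n,δ}` satisfies a triangle inequality in `δ` and `ρ_FK` is a pseudometric.
An orbit point `T^m x` is matched with `x` by the shift `i ↦ i + m`, hence `ρ_FK(x, T^m x) = 0`.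
Given transitivity and FK-continuity at `x` and `y`, pick `z` near `y` with `T^m z` near `x`;
then `ρ_FK(x, y) ≤ ρ_FK(x, T^m z) + ρ_FK(T^m z, z) + ρ_FK(z, y)` is arbitrarily small. -/

open Filter

namespace FKPaper

variable {X : Type*} [MetricSpace X] {T : X → X} {δ δ₁ δ₂ : ℝ} {n k k₁ k₂ : ℕ} {x y z : X}

/-- An `(n,δ)`-match of fit `k`, with the order-preserving bijection `π : D → R` encoded by the
increasing enumerations `i` of `D` and `j` of `R`. -/
def IsMatch (T : X → X) (δ : ℝ) (n : ℕ) (x z : X) {k : ℕ} (i j : Fin k → ℕ) : Prop :=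
  StrictMono i ∧ StrictMono j ∧ (∀ s, i s < n) ∧ (∀ s, j s < n) ∧
    ∀ s, dist (T^[i s] x) (T^[j s] z) < δ

namespace IsMatch

variable {i j : Fin k → ℕ}

theorem symm (h : IsMatch T δ n x z i j) : IsMatch T δ n z x j i :=
  ⟨h.2.1, h.1, h.2.2.2.1, h.2.2.1, fun s => dist_comm (T^[i s] x) _ ▸ h.2.2.2.2 s⟩

theorem card_le (h : IsMatch T δ n x z i j) : k ≤ n := by
  simpa using Fintype.card_le_of_injective (fun s => (⟨i s, h.2.2.1 s⟩ : Fin n))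
    fun a b hab => h.1.injective (congrArg Fin.val hab)

theorem comp {i₁ j₁ : Fin k₁ → ℕ} {i₂ j₂ : Fin k₂ → ℕ} {m : ℕ} {p : Fin m → Fin k₁}
    {q : Fin m → Fin k₂} (h₁ : IsMatch T δ₁ n x y i₁ j₁) (h₂ : IsMatch T δ₂ n y z i₂ j₂)
    (hp : StrictMono p) (hq : StrictMono q) (hpq : j₁ ∘ p = i₂ ∘ q) :
    IsMatch T (δ₁ + δ₂) n x z (i₁ ∘ p) (j₂ ∘ q) := by
  refine ⟨h₁.1.comp hp, h₂.2.1.comp hq, fun s => h₁.2.2.1 _, fun s => h₂.2.2.2.1 _, fun s => ?_⟩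
  have hmid : j₁ (p s) = i₂ (q s) := congrFun hpq s
  calc dist (T^[i₁ (p s)] x) (T^[j₂ (q s)] z)
      ≤ dist (T^[i₁ (p s)] x) (T^[j₁ (p s)] y) + dist (T^[i₂ (q s)] y) (T^[j₂ (q s)] z) :=
        hmid ▸ dist_triangle _ _ _
    _ < δ₁ + δ₂ := add_lt_add (h₁.2.2.2.2 _) (h₂.2.2.2.2 _)

theorem le_maxFit (h : IsMatch T δ n x z i j) : k ≤ maxFit T δ n x z :=
  le_csSup ⟨n, fun _ ⟨_, _, h'⟩ => IsMatch.card_le h'⟩ ⟨i, j, h⟩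

end IsMatch

theorem exists_isMatch_maxFit (T : X → X) (δ : ℝ) (n : ℕ) (x z : X) :
    ∃ i j : Fin (maxFit T δ n x z) → ℕ, IsMatch T δ n x z i j :=
  Nat.sSup_mem (s := {k | ∃ i j : Fin k → ℕ, IsMatch T δ n x z i j})
    ⟨0, Fin.elim0, Fin.elim0, by simp [IsMatch, StrictMono]⟩
    ⟨n, fun _ ⟨_, _, h⟩ => h.card_le⟩

theorem maxFit_le (T : X → X) (δ : ℝ) (n : ℕ) (x z : X) : maxFit T δ n x z ≤ n :=
  let ⟨_, _, h⟩ := exists_isMatch_maxFit T δ n x z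
  h.card_le

theorem maxFit_comm (T : X → X) (δ : ℝ) (n : ℕ) (x z : X) :
    maxFit T δ n x z = maxFit T δ n z x :=
  le_antisymm (let ⟨_, _, h⟩ := exists_isMatch_maxFit T δ n x z; h.symm.le_maxFit)
    (let ⟨_, _, h⟩ := exists_isMatch_maxFit T δ n z x; h.symm.le_maxFit)

theorem exists_common_reindexing {j₁ : Fin k₁ → ℕ} {i₂ : Fin k₂ → ℕ} (hj₁ : StrictMono j₁)
    (hi₂ : StrictMono i₂) (hj₁n : ∀ s, j₁ s < n) (hi₂n : ∀ s, i₂ s < n) :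
    ∃ (m : ℕ) (p : Fin m → Fin k₁) (q : Fin m → Fin k₂),
      StrictMono p ∧ StrictMono q ∧ j₁ ∘ p = i₂ ∘ q ∧ k₁ + k₂ ≤ n + m := by
  classical
  set A := Finset.univ.image j₁
  set B := Finset.univ.image i₂
  have hA : A.card = k₁ := by simp [A, Finset.card_image_of_injective _ hj₁.injective]
  have hB : B.card = k₂ := by simp [B, Finset.card_image_of_injective _ hi₂.injective]
  have hAB : (A ∪ B).card ≤ n := by
    simpa using Finset.card_le_card (s := A ∪ B) (t := Finset.range n) (by
      intro a ha
      simp only [A, B, Finset.mem_union, Finset.mem_image, Finset.mem_univ, true_and] at ha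
      rcases ha with ⟨s, rfl⟩ | ⟨s, rfl⟩ <;> simp [hj₁n, hi₂n])
  let e := (A ∩ B).orderEmbOfFin rfl
  have hpA (s) : ∃ a, j₁ a = e s := by
    simpa [A] using (Finset.mem_inter.1 ((A ∩ B).orderEmbOfFin_mem rfl s)).1
  have hqB (s) : ∃ b, i₂ b = e s := by
    simpa [B] using (Finset.mem_inter.1 ((A ∩ B).orderEmbOfFin_mem rfl s)).2
  choose p hp using hpA
  choose q hq using hqB
  refine ⟨(A ∩ B).card, p, q, fun a b hab => ?_, fun a b hab => ?_, ?_, ?_⟩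
  · exact hj₁.lt_iff_lt.1 (by rw [hp, hp]; exact e.strictMono hab)
  · exact hi₂.lt_iff_lt.1 (by rw [hq, hq]; exact e.strictMono hab)
  · funext s
    simp [hp, hq]
  · have := Finset.card_union_add_card_inter A B
    omega

theorem maxFit_add_maxFit_le (T : X → X) (δ₁ δ₂ : ℝ) (n : ℕ) (x y z : X) :
    maxFit T δ₁ n x y + maxFit T δ₂ n y z ≤ n + maxFit T (δ₁ + δ₂) n x z := by
  obtain ⟨i₁, j₁, h₁⟩ := exists_isMatch_maxFit T δ₁ n x y
  obtain ⟨i₂, j₂, h₂⟩ := exists_isMatch_maxFit T δ₂ n y z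
  obtain ⟨m, p, q, hp, hq, hpq, hcard⟩ :=
    exists_common_reindexing h₁.2.1 h₂.1 h₁.2.2.2.1 h₂.2.2.1
  exact hcard.trans (Nat.add_le_add_left (h₁.comp h₂ hp hq hpq).le_maxFit n)

theorem fbarN_nonneg (T : X → X) (δ : ℝ) (n : ℕ) (x z : X) : 0 ≤ fbarN T δ n x z :=
  sub_nonneg.2 <| div_le_one_of_le₀ (by exact_mod_cast maxFit_le T δ n x z) n.cast_nonneg

theorem fbarN_le_one (T : X → X) (δ : ℝ) (n : ℕ) (x z : X) : fbarN T δ n x z ≤ 1 :=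
  sub_le_self _ (by positivity)

theorem fbarN_triangle (T : X → X) (δ₁ δ₂ : ℝ) (n : ℕ) (x y z : X) :
    fbarN T (δ₁ + δ₂) n x z ≤ fbarN T δ₁ n x y + fbarN T δ₂ n y z := by
  have hfit : ((maxFit T δ₁ n x y + maxFit T δ₂ n y z : ℕ) : ℝ) / n
      ≤ ((n + maxFit T (δ₁ + δ₂) n x z : ℕ) : ℝ) / n :=
    div_le_div_of_nonneg_right (by exact_mod_cast maxFit_add_maxFit_le T δ₁ δ₂ n x y z)
      n.cast_nonneg
  have hn : (n : ℝ) / n ≤ 1 := div_self_le_one _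
  simp only [fbarN, Nat.cast_add, add_div] at hfit ⊢
  linarith

theorem isBoundedUnder_ge_fbarN (T : X → X) (δ : ℝ) (x z : X) :
    IsBoundedUnder (· ≥ ·) atTop fun n => fbarN T δ n x z :=
  isBoundedUnder_of ⟨0, fun n => fbarN_nonneg T δ n x z⟩

theorem isBoundedUnder_le_fbarN (T : X → X) (δ : ℝ) (x z : X) :
    IsBoundedUnder (· ≤ ·) atTop fun n => fbarN T δ n x z :=
  isBoundedUnder_of ⟨1, fun n => fbarN_le_one T δ n x z⟩

theorem fbar_nonneg (T : X → X) (δ : ℝ) (x z : X) : 0 ≤ fbar T δ x z :=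
  le_limsup_of_frequently_le (Frequently.of_forall fun n => fbarN_nonneg T δ n x z)
    (isBoundedUnder_le_fbarN T δ x z)

theorem fbar_le_one (T : X → X) (δ : ℝ) (x z : X) : fbar T δ x z ≤ 1 :=
  limsup_le_of_le (isBoundedUnder_ge_fbarN T δ x z).isCoboundedUnder_le
    (Eventually.of_forall fun n => fbarN_le_one T δ n x z)

theorem fbar_triangle (T : X → X) (δ₁ δ₂ : ℝ) (x y z : X) :
    fbar T (δ₁ + δ₂) x z ≤ fbar T δ₁ x y + fbar T δ₂ y z :=
  (limsup_le_limsup (Eventually.of_forall fun n => fbarN_triangle T δ₁ δ₂ n x y z)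
      (isBoundedUnder_ge_fbarN T _ x z).isCoboundedUnder_le
      (isBoundedUnder_le_add (isBoundedUnder_le_fbarN T δ₁ x y)
        (isBoundedUnder_le_fbarN T δ₂ y z))).trans
    (limsup_add_le (isBoundedUnder_ge_fbarN T δ₁ x y) (isBoundedUnder_le_fbarN T δ₁ x y)
      (isBoundedUnder_ge_fbarN T δ₂ y z).isCoboundedUnder_le (isBoundedUnder_le_fbarN T δ₂ y z))

theorem fbarN_iterate_le (hδ : 0 < δ) (hn : 0 < n) (m : ℕ) (x : X) :
    fbarN T δ n x (T^[m] x) ≤ m / n := by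
  have hn' : (0 : ℝ) < n := Nat.cast_pos.2 hn
  by_cases hmn : m ≤ n
  · have hshift : IsMatch T δ n x (T^[m] x) (k := n - m) (fun s => s + m) (fun s => s) :=
      ⟨fun _ _ h => Nat.add_lt_add_right h m, fun _ _ h => h,
        fun s => by have := s.2; dsimp only; omega, fun s => by have := s.2; dsimp only; omega,
        fun s => by simpa [← Function.iterate_add_apply] using hδ⟩
    have hfit : ((n - m : ℕ) : ℝ) ≤ maxFit T δ n x (T^[m] x) := by
      exact_mod_cast hshift.le_maxFit
    rw [fbarN, sub_le_iff_le_add, ← add_div, le_div_iff₀ hn', one_mul]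
    push_cast [hmn] at hfit
    linarith
  · exact (fbarN_le_one T δ n x _).trans <|
      (one_le_div hn').2 (by exact_mod_cast (Nat.lt_of_not_le hmn).le)

theorem fbar_iterate_eq_zero (hδ : 0 < δ) (m : ℕ) (x : X) : fbar T δ x (T^[m] x) = 0 := by
  have hlim := tendsto_const_div_atTop_nhds_zero_nat (m : ℝ)
  refine le_antisymm ?_ (fbar_nonneg T δ x _)
  calc fbar T δ x (T^[m] x) ≤ limsup (fun n : ℕ => (m : ℝ) / n) atTop :=
        limsup_le_limsup ((eventually_gt_atTop 0).mono fun n hn => fbarN_iterate_le hδ hn m x)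
          (isBoundedUnder_ge_fbarN T δ x _).isCoboundedUnder_le hlim.isBoundedUnder_le
    _ = 0 := hlim.limsup_eq

theorem nonempty_fbar_lt (T : X → X) (x z : X) : {δ : ℝ | 0 < δ ∧ fbar T δ x z < δ}.Nonempty :=
  ⟨2, two_pos, (fbar_le_one T 2 x z).trans_lt one_lt_two⟩

theorem rhoFK_nonneg (T : X → X) (x z : X) : 0 ≤ rhoFK T x z :=
  le_csInf (nonempty_fbar_lt T x z) fun _ hδ => hδ.1.le

theorem rhoFK_le (hδ : 0 < δ) (h : fbar T δ x z < δ) : rhoFK T x z ≤ δ :=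
  csInf_le ⟨0, fun _ hδ => hδ.1.le⟩ ⟨hδ, h⟩

theorem rhoFK_comm (T : X → X) (x z : X) : rhoFK T x z = rhoFK T z x := by
  simp only [rhoFK, fbar, fbarN, maxFit_comm T _ _ x z]

theorem rhoFK_triangle (T : X → X) (x y z : X) : rhoFK T x z ≤ rhoFK T x y + rhoFK T y z := by
  refine le_of_forall_pos_lt_add fun ε hε => ?_
  obtain ⟨δ₁, ⟨hδ₁, h₁⟩, hδ₁ε⟩ :=
    exists_lt_of_csInf_lt (nonempty_fbar_lt T x y) (lt_add_of_pos_right (rhoFK T x y) (half_pos hε))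
  obtain ⟨δ₂, ⟨hδ₂, h₂⟩, hδ₂ε⟩ :=
    exists_lt_of_csInf_lt (nonempty_fbar_lt T y z) (lt_add_of_pos_right (rhoFK T y z) (half_pos hε))
  have := rhoFK_le (add_pos hδ₁ hδ₂) ((fbar_triangle T δ₁ δ₂ x y z).trans_lt (add_lt_add h₁ h₂))
  linarith

theorem rhoFK_iterate_eq_zero (T : X → X) (m : ℕ) (x : X) : rhoFK T x (T^[m] x) = 0 :=
  le_antisymm
    (le_of_forall_pos_le_add fun δ hδ => by
      simpa using rhoFK_le hδ ((fbar_iterate_eq_zero hδ m x).trans_lt hδ))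
    (rhoFK_nonneg T x _)

theorem rhoFK_eq_zero_of_fkContinuityPoint (htrans : IsTransitive T)
    (hx : FKContinuityPoint T x) (hy : FKContinuityPoint T y) : rhoFK T x y = 0 := by
  refine le_antisymm (le_of_forall_pos_le_add fun ε hε => ?_) (rhoFK_nonneg T x y)
  obtain ⟨δx, hδx, hx⟩ := hx (ε / 2) (half_pos hε)
  obtain ⟨δy, hδy, hy⟩ := hy (ε / 2) (half_pos hε)
  obtain ⟨m, -, z, hzx, hzy⟩ := htrans (Metric.ball x δx) (Metric.ball y δy) Metric.isOpen_ball
    Metric.isOpen_ball ⟨x, Metric.mem_ball_self hδx⟩ ⟨y, Metric.mem_ball_self hδy⟩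
  have hxz : rhoFK T x (T^[m] z) ≤ ε / 2 := hx _ (Metric.mem_ball'.1 hzx).le
  have hzy : rhoFK T z y ≤ ε / 2 := by
    rw [rhoFK_comm]
    exact hy z (Metric.mem_ball'.1 hzy).le
  have hzz : rhoFK T (T^[m] z) z = 0 := by
    rw [rhoFK_comm]
    exact rhoFK_iterate_eq_zero T m z
  linarith [rhoFK_triangle T x (T^[m] z) y, rhoFK_triangle T (T^[m] z) z y]

end FKPaper

open FKPaper

theorem transitive_fkContinuous_iff_general {X : Type*} [MetricSpace X]
    (T : X → X) (htrans : IsTransitive T) :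
    (∀ x : X, FKContinuityPoint T x) ↔ ∀ x y : X, rhoFK T x y = 0 :=
  ⟨fun h x y => rhoFK_eq_zero_of_fkContinuityPoint htrans (h x) (h y),
    fun h x _ hε => ⟨1, one_pos, fun y _ => (h x y).le.trans hε.le⟩⟩

/-- a transitive TDS is FK-continuous iff `ρ_FK` vanishes identically. -/
theorem transitive_fkContinuous_iff {X : Type*} [MetricSpace X] [CompactSpace X] [Nonempty X]
    (T : X → X) (hT : Continuous T) (htrans : IsTransitive T) :
    (∀ x : X, FKContinuityPoint T x) ↔ ∀ x y : X, rhoFK T x y = 0 :=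
  transitive_fkContinuous_iff_general T htrans
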